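/- arXiv:2405.09322 — 2 statements merged into one kernel-verified Lean document; each statement's English description precedes it below -/
import Mathlib

section
/- Let G be a bipartite graph with vertex classes X and Y where |X| = |Y| = n, and let d_1,...,d_n be the degrees of the vertices in X. Then the number of perfect matchings of G is at most the product over i of (d_i!)^(1/d_i). -/
open Finset

lemma amgm_pow {ι : Type*} (F : Finset ι) (t : ι → ℕ) (M : ℕ) (hM : ∑ k ∈ F, t k = M) :
    (M : ℝ) ^ M ≤ (F.card : ℝ) ^ M * ∏ k ∈ F, (t k : ℝ) ^ (t k) := by
  rcases Nat.eq_zero_or_pos M with rfl | hM1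
  · have ht : ∀ k ∈ F, t k = 0 := by
      intro k hk; exact (Finset.sum_eq_zero_iff.mp hM) k hk
    simp only [pow_zero, Nat.cast_zero, one_mul]
    rw [Finset.prod_congr rfl (fun k hk => by rw [ht k hk])]
    simp
  have hM0 : (M : ℝ) ≠ 0 := Nat.cast_ne_zero.mpr hM1.ne'
  have hF : F.Nonempty := by
    by_contra h
    rw [Finset.not_nonempty_iff_eq_empty] at h
    subst h; simp at hM; omega
  have hr0 : (0 : ℝ) < F.card := by exact_mod_cast Finset.card_pos.mpr hF
  set r : ℝ := (F.card : ℝ) with hr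
  set w : ι → ℝ := fun k => (t k : ℝ) / M with hw
  set z : ι → ℝ := fun k => (M : ℝ) / (r * t k) with hz
  have hwnn : ∀ k ∈ F, 0 ≤ w k := fun k _ => by positivity
  have hznn : ∀ k ∈ F, 0 ≤ z k := fun k _ => by positivity
  have hw1 : ∑ k ∈ F, w k = 1 := by
    rw [hw, ← Finset.sum_div]
    rw [show ∑ k ∈ F, (t k : ℝ) = (M : ℝ) by exact_mod_cast congrArg Nat.cast hM]
    exact div_self hM0
  have key := Real.geom_mean_le_arith_mean_weighted F w z hwnn hw1 hznn
  have hsum1 : ∑ k ∈ F, w k * z k ≤ 1 := by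
    have hterm : ∀ k ∈ F, w k * z k ≤ 1 / r := by
      intro k _
      rcases Nat.eq_zero_or_pos (t k) with h0 | hpos
      · simp [hw, hz, h0]; positivity
      · have htk : ((t k : ℝ)) ≠ 0 := Nat.cast_ne_zero.mpr hpos.ne'
        have : w k * z k = 1 / r := by
          simp only [hw, hz]
          field_simp
        rw [this]
    calc ∑ k ∈ F, w k * z k ≤ ∑ _k ∈ F, 1 / r := Finset.sum_le_sum hterm
      _ = 1 := by rw [Finset.sum_const, nsmul_eq_mul]; field_simp; exact hr.symm
  have hP1 : ∏ k ∈ F, z k ^ w k ≤ 1 := le_trans key hsum1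
  have hPnn : (0:ℝ) ≤ ∏ k ∈ F, z k ^ w k :=
    Finset.prod_nonneg fun k hk => Real.rpow_nonneg (hznn k hk) _
  have hQ : ∏ k ∈ F, z k ^ (t k) ≤ 1 := by
    have hpow := Real.rpow_le_one hPnn hP1 (Nat.cast_nonneg M)
    rw [← Real.finset_prod_rpow F _ (fun k hk => Real.rpow_nonneg (hznn k hk) _) (M:ℝ)] at hpow
    calc ∏ k ∈ F, z k ^ (t k)
        = ∏ k ∈ F, (z k ^ w k) ^ (M : ℝ) := by
          apply Finset.prod_congr rfl
          intro k hk
          rw [← Real.rpow_natCast (z k) (t k), ← Real.rpow_mul (hznn k hk)]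
          congr 1
          rw [hw]
          field_simp
      _ ≤ 1 := hpow
  have hsplit : ∀ k ∈ F, (M : ℝ) ^ (t k) = z k ^ (t k) * (r * t k) ^ (t k) := by
    intro k _
    rcases Nat.eq_zero_or_pos (t k) with h0 | hpos
    · simp [h0]
    · rw [← mul_pow]
      congr 1
      have htk : ((t k : ℝ)) ≠ 0 := Nat.cast_ne_zero.mpr hpos.ne'
      rw [hz]
      field_simp
  calc (M : ℝ) ^ M = ∏ k ∈ F, (M : ℝ) ^ (t k) := by rw [Finset.prod_pow_eq_pow_sum, hM]
    _ = ∏ k ∈ F, (z k ^ (t k) * (r * t k) ^ (t k)) := Finset.prod_congr rfl hsplit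
    _ = (∏ k ∈ F, z k ^ (t k)) * ∏ k ∈ F, (r * t k) ^ (t k) := Finset.prod_mul_distrib
    _ ≤ 1 * ∏ k ∈ F, (r * t k) ^ (t k) := by
        apply mul_le_mul_of_nonneg_right hQ
        exact Finset.prod_nonneg fun k _ => by positivity
    _ = ∏ k ∈ F, (r ^ (t k) * (t k : ℝ) ^ (t k)) := by
        rw [one_mul]; exact Finset.prod_congr rfl fun k _ => mul_pow ..
    _ = r ^ M * ∏ k ∈ F, (t k : ℝ) ^ (t k) := by
        rw [Finset.prod_mul_distrib, Finset.prod_pow_eq_pow_sum, hM]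
open Finset

variable {n : ℕ} (E : Fin n → Fin n → Prop) [∀ i, DecidablePred (E i)]

/-- perfect matchings between row set S and column set T -/
def pm (S T : Finset (Fin n)) : Finset (Finset (Fin n × Fin n)) :=
  (S ×ˢ T).powerset.filter fun m =>
    m.image Prod.fst = S ∧ m.image Prod.snd = T ∧ m.card = S.card ∧ m.card = T.card ∧
      ∀ p ∈ m, E p.1 p.2

lemma mem_pm {S T : Finset (Fin n)} {m : Finset (Fin n × Fin n)} :
    m ∈ pm E S T ↔ m ⊆ S ×ˢ T ∧ m.image Prod.fst = S ∧ m.image Prod.snd = T ∧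
      m.card = S.card ∧ m.card = T.card ∧ ∀ p ∈ m, E p.1 p.2 := by
  simp [pm, mem_filter, mem_powerset, and_assoc]

lemma pm_fst_injOn {S T : Finset (Fin n)} {m : Finset (Fin n × Fin n)} (hm : m ∈ pm E S T) :
    Set.InjOn Prod.fst (m : Set (Fin n × Fin n)) := by
  obtain ⟨-, h1, -, h2, -, -⟩ := (mem_pm E).mp hm
  exact Finset.injOn_of_card_image_eq (by rw [h1, ← h2])

lemma pm_snd_injOn {S T : Finset (Fin n)} {m : Finset (Fin n × Fin n)} (hm : m ∈ pm E S T) :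
    Set.InjOn Prod.snd (m : Set (Fin n × Fin n)) := by
  obtain ⟨-, -, h1, -, h2, -⟩ := (mem_pm E).mp hm
  exact Finset.injOn_of_card_image_eq (by rw [h1, ← h2])

/-- the column matched to row `i` -/
noncomputable def col (m : Finset (Fin n × Fin n)) (i : Fin n) : Fin n :=
  if h : ∃ k, (i, k) ∈ m then h.choose else i

lemma col_mem_of_exists {m : Finset (Fin n × Fin n)} {i : Fin n} (h : ∃ k, (i, k) ∈ m) :
    (i, col m i) ∈ m := by
  rw [col, dif_pos h]; exact h.choose_spec

lemma col_spec {S T : Finset (Fin n)} {m : Finset (Fin n × Fin n)} (hm : m ∈ pm E S T)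
    {i : Fin n} (hi : i ∈ S) : (i, col m i) ∈ m := by
  obtain ⟨-, h1, -, -, -, -⟩ := (mem_pm E).mp hm
  rw [← h1, mem_image] at hi
  obtain ⟨p, hp, hpi⟩ := hi
  exact col_mem_of_exists ⟨p.2, by rwa [← hpi, Prod.mk.eta]⟩

lemma col_eq {S T : Finset (Fin n)} {m : Finset (Fin n × Fin n)} (hm : m ∈ pm E S T)
    {i k : Fin n} (hik : (i, k) ∈ m) : col m i = k := by
  have h := col_mem_of_exists ⟨k, hik⟩
  have := pm_fst_injOn E hm (Finset.mem_coe.mpr h) (Finset.mem_coe.mpr hik) rfl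
  exact congrArg Prod.snd this

lemma col_mem_T {S T : Finset (Fin n)} {m : Finset (Fin n × Fin n)} (hm : m ∈ pm E S T)
    {i : Fin n} (hi : i ∈ S) : col m i ∈ T := by
  have h := col_spec E hm hi
  obtain ⟨hsub, -⟩ := (mem_pm E).mp hm
  exact (Finset.mem_product.mp (hsub h)).2

lemma col_edge {S T : Finset (Fin n)} {m : Finset (Fin n × Fin n)} (hm : m ∈ pm E S T)
    {i : Fin n} (hi : i ∈ S) : E i (col m i) := by
  obtain ⟨-, -, -, -, -, hE⟩ := (mem_pm E).mp hm
  exact hE _ (col_spec E hm hi)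

lemma erase_mem_pm {S T : Finset (Fin n)} {m : Finset (Fin n × Fin n)} {i k : Fin n}
    (hi : i ∈ S) (hk : k ∈ T) (hm : m ∈ pm E S T) (hik : (i, k) ∈ m) :
    m.erase (i, k) ∈ pm E (S.erase i) (T.erase k) := by
  obtain ⟨hsub, h1, h2, h3, h4, h5⟩ := (mem_pm E).mp hm
  have hfst : ∀ p ∈ m, p ≠ (i, k) → p.1 ≠ i := by
    intro p hp hne he
    exact hne (pm_fst_injOn E hm (Finset.mem_coe.mpr hp) (Finset.mem_coe.mpr hik) he)
  have hsnd : ∀ p ∈ m, p ≠ (i, k) → p.2 ≠ k := by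
    intro p hp hne he
    exact hne (pm_snd_injOn E hm (Finset.mem_coe.mpr hp) (Finset.mem_coe.mpr hik) he)
  rw [mem_pm]
  refine ⟨?_, ?_, ?_, ?_, ?_, ?_⟩
  · intro p hp
    obtain ⟨hne, hpm⟩ := Finset.mem_erase.mp hp
    have := Finset.mem_product.mp (hsub hpm)
    exact Finset.mem_product.mpr ⟨Finset.mem_erase.mpr ⟨hfst p hpm hne, this.1⟩,
      Finset.mem_erase.mpr ⟨hsnd p hpm hne, this.2⟩⟩
  · ext j
    simp only [mem_image, Finset.mem_erase]
    constructor
    · rintro ⟨p, ⟨hne, hpm⟩, rfl⟩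
      exact ⟨hfst p hpm hne, h1 ▸ Finset.mem_image_of_mem _ hpm⟩
    · rintro ⟨hji, hjS⟩
      rw [← h1, mem_image] at hjS
      obtain ⟨p, hp, rfl⟩ := hjS
      exact ⟨p, ⟨fun he => hji (by rw [he]), hp⟩, rfl⟩
  · ext j
    simp only [mem_image, Finset.mem_erase]
    constructor
    · rintro ⟨p, ⟨hne, hpm⟩, rfl⟩
      exact ⟨hsnd p hpm hne, h2 ▸ Finset.mem_image_of_mem _ hpm⟩
    · rintro ⟨hji, hjT⟩
      rw [← h2, mem_image] at hjT
      obtain ⟨p, hp, rfl⟩ := hjT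
      exact ⟨p, ⟨fun he => hji (by rw [he]), hp⟩, rfl⟩
  · rw [Finset.card_erase_of_mem hik, Finset.card_erase_of_mem hi, h3]
  · rw [Finset.card_erase_of_mem hik, Finset.card_erase_of_mem hk, h4]
  · exact fun p hp => h5 p (Finset.mem_of_mem_erase hp)

lemma insert_mem_pm {S T : Finset (Fin n)} {m : Finset (Fin n × Fin n)} {i k : Fin n}
    (hi : i ∈ S) (hk : k ∈ T) (hE : E i k) (hm : m ∈ pm E (S.erase i) (T.erase k)) :
    insert (i, k) m ∈ pm E S T := by
  obtain ⟨hsub, h1, h2, h3, h4, h5⟩ := (mem_pm E).mp hm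
  have hnotmem : (i, k) ∉ m := fun h => by
    have := (Finset.mem_product.mp (hsub h)).1
    exact (Finset.mem_erase.mp this).1 rfl
  rw [mem_pm]
  refine ⟨?_, ?_, ?_, ?_, ?_, ?_⟩
  · intro p hp
    rcases Finset.mem_insert.mp hp with rfl | hp
    · exact Finset.mem_product.mpr ⟨hi, hk⟩
    · have := Finset.mem_product.mp (hsub hp)
      exact Finset.mem_product.mpr ⟨Finset.mem_of_mem_erase this.1, Finset.mem_of_mem_erase this.2⟩
  · rw [Finset.image_insert, h1]; exact Finset.insert_erase hi
  · rw [Finset.image_insert, h2]; exact Finset.insert_erase hk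
  · rw [Finset.card_insert_of_notMem hnotmem, h3, Finset.card_erase_add_one hi]
  · rw [Finset.card_insert_of_notMem hnotmem, h4, Finset.card_erase_add_one hk]
  · intro p hp
    rcases Finset.mem_insert.mp hp with rfl | hp
    · exact hE
    · exact h5 p hp

lemma card_filter_pm {S T : Finset (Fin n)} {i k : Fin n}
    (hi : i ∈ S) (hk : k ∈ T) (hE : E i k) :
    ((pm E S T).filter (fun m => (i, k) ∈ m)).card = (pm E (S.erase i) (T.erase k)).card := by
  refine Finset.card_nbij' (fun m => m.erase (i, k)) (fun m => insert (i, k) m) ?_ ?_ ?_ ?_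
  · intro m hm
    obtain ⟨hm, hik⟩ := Finset.mem_filter.mp hm
    exact erase_mem_pm E hi hk hm hik
  · intro m hm
    exact Finset.mem_filter.mpr ⟨insert_mem_pm E hi hk hE hm, Finset.mem_insert_self _ _⟩
  · intro m hm
    exact Finset.insert_erase (Finset.mem_filter.mp hm).2
  · intro m hm
    refine Finset.erase_insert ?_
    intro h
    have hsub := ((mem_pm E).mp hm).1
    have := (Finset.mem_product.mp (hsub h)).1
    exact (Finset.mem_erase.mp this).1 rfl

lemma pm_fiber_eq {S T : Finset (Fin n)} {i : Fin n} (k : Fin n) :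
    ((pm E S T).filter (fun m => col m i = k)) = ((pm E S T).filter (fun m => (i, k) ∈ m)) ∨
      i ∉ S := by
  by_cases hi : i ∈ S
  · left
    apply Finset.filter_congr
    intro m hm
    constructor
    · rintro rfl; exact col_spec E hm hi
    · intro h; exact col_eq E hm h
  · right; exact hi

lemma pm_card_expansion {S T : Finset (Fin n)} {i : Fin n} (hi : i ∈ S) :
    (pm E S T).card = ∑ k ∈ T.filter (E i), (pm E (S.erase i) (T.erase k)).card := by
  rw [Finset.card_eq_sum_card_fiberwise (f := fun m => col m i) (t := T.filter (E i))
    (fun m hm => Finset.mem_filter.mpr ⟨col_mem_T E hm hi, col_edge E hm hi⟩)]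
  apply Finset.sum_congr rfl
  intro k hk
  obtain ⟨hkT, hkE⟩ := Finset.mem_filter.mp hk
  rcases pm_fiber_eq E (i := i) (S := S) (T := T) k with h | h
  · rw [h, card_filter_pm E hi hkT hkE]
  · exact absurd hi h

lemma pm_prod_expansion {S T : Finset (Fin n)} {i : Fin n} (hi : i ∈ S) (f : Fin n → ℝ) :
    ∏ m ∈ pm E S T, f (col m i) =
      ∏ k ∈ T.filter (E i), f k ^ (pm E (S.erase i) (T.erase k)).card := by
  rw [← Finset.prod_fiberwise_of_maps_to' (g := fun m => col m i) (t := T.filter (E i))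
    (fun m hm => Finset.mem_filter.mpr ⟨col_mem_T E hm hi, col_edge E hm hi⟩)]
  apply Finset.prod_congr rfl
  intro k hk
  obtain ⟨hkT, hkE⟩ := Finset.mem_filter.mp hk
  rw [Finset.prod_const]
  rcases pm_fiber_eq E (i := i) (S := S) (T := T) k with h | h
  · rw [h, card_filter_pm E hi hkT hkE]
  · exact absurd hi h

lemma col_injOn {S T : Finset (Fin n)} {m : Finset (Fin n × Fin n)} (hm : m ∈ pm E S T) :
    Set.InjOn (col m) S := by
  intro i hi i' hi' h
  have h1 := col_spec E hm (by exact_mod_cast hi)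
  have h2 := col_spec E hm (by exact_mod_cast hi')
  rw [h] at h1
  have := pm_snd_injOn E hm (Finset.mem_coe.mpr h1) (Finset.mem_coe.mpr h2) rfl
  exact congrArg Prod.fst this

lemma card_colFilter {S T : Finset (Fin n)} {m : Finset (Fin n × Fin n)} (hm : m ∈ pm E S T)
    (j : Fin n) :
    (S.filter (fun i => E j (col m i))).card = (T.filter (E j)).card := by
  refine Finset.card_nbij (col m) ?_ ?_ ?_
  · intro i hi
    obtain ⟨hiS, hiE⟩ := Finset.mem_filter.mp hi
    exact Finset.mem_filter.mpr ⟨col_mem_T E hm hiS, hiE⟩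
  · intro i hi i' hi' h
    simp only [Finset.coe_filter, Set.mem_setOf_eq] at hi hi'
    exact col_injOn E hm (Finset.mem_coe.mpr hi.1) (Finset.mem_coe.mpr hi'.1) h
  · intro k hk
    simp only [Finset.coe_filter, Set.mem_setOf_eq, Set.mem_image] at hk ⊢
    obtain ⟨hkT, hkE⟩ := hk
    obtain ⟨-, -, h2, -, -, -⟩ := (mem_pm E).mp hm
    rw [← h2, mem_image] at hkT
    obtain ⟨p, hp, rfl⟩ := hkT
    have hp1S : p.1 ∈ S := by
      obtain ⟨-, h1, -, -, -, -⟩ := (mem_pm E).mp hm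
      rw [← h1]; exact Finset.mem_image_of_mem _ hp
    have : col m p.1 = p.2 := col_eq E hm (by rwa [Prod.mk.eta])
    exact ⟨p.1, ⟨hp1S, this ▸ hkE⟩, this⟩

lemma deg_pos {S T : Finset (Fin n)} (hne : (pm E S T).Nonempty) {i : Fin n} (hi : i ∈ S) :
    0 < (T.filter (E i)).card := by
  obtain ⟨m, hm⟩ := hne
  exact Finset.card_pos.mpr ⟨col m i, Finset.mem_filter.mpr ⟨col_mem_T E hm hi, col_edge E hm hi⟩⟩

lemma keycalc (N a : ℕ) (ha : 1 ≤ a) (haN : a ≤ N + 1) :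
    (a : ℝ) * ((((a-1).factorial : ℝ)) ^ ((1:ℝ)/(((a-1 : ℕ)) : ℝ))) ^ (a - 1) *
      (((a.factorial : ℝ)) ^ ((1:ℝ)/(a : ℝ))) ^ (N + 1 - a) =
    ((a.factorial : ℝ)) ^ (((N : ℝ) + 1)/(a : ℝ)) := by
  have ha0 : (a : ℝ) ≠ 0 := Nat.cast_ne_zero.mpr (by omega)
  have hfac1 : (0:ℝ) < ((a-1).factorial : ℝ) := by exact_mod_cast Nat.factorial_pos _
  have hfac : (0:ℝ) < (a.factorial : ℝ) := by exact_mod_cast Nat.factorial_pos _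
  have h1 : ((((a-1).factorial : ℝ)) ^ ((1:ℝ)/(((a-1 : ℕ)) : ℝ))) ^ (a - 1)
      = ((a-1).factorial : ℝ) := by
    rw [← Real.rpow_natCast ((((a-1).factorial : ℝ)) ^ ((1:ℝ)/(((a-1 : ℕ)) : ℝ))) (a-1),
      ← Real.rpow_mul hfac1.le]
    rcases eq_or_lt_of_le ha with h | h
    · rw [← h]; norm_num
    · have : ((a - 1 : ℕ) : ℝ) ≠ 0 := Nat.cast_ne_zero.mpr (by omega)
      rw [one_div, inv_mul_cancel₀ this, Real.rpow_one]
  have h2 : (((a.factorial : ℝ)) ^ ((1:ℝ)/(a : ℝ))) ^ (N + 1 - a)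
      = ((a.factorial : ℝ)) ^ ((((N : ℝ) + 1) - a)/(a : ℝ)) := by
    rw [← Real.rpow_natCast (((a.factorial : ℝ)) ^ ((1:ℝ)/(a : ℝ))) (N + 1 - a),
      ← Real.rpow_mul hfac.le]
    congr 1
    rw [Nat.cast_sub haN]
    push_cast
    field_simp
  rw [h1, h2]
  have h3 : (a : ℝ) * ((a-1).factorial : ℝ) = (a.factorial : ℝ) := by
    exact_mod_cast congrArg Nat.cast (Nat.mul_factorial_pred (by omega))
  rw [h3]
  nth_rewrite 1 [← Real.rpow_one ((a.factorial : ℝ))]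
  rw [← Real.rpow_add hfac]
  congr 1
  field_simp
  ring

lemma pm_card_le (N : ℕ) : ∀ (S T : Finset (Fin n)), S.card = N →
    ((pm E S T).card : ℝ) ≤
      ∏ j ∈ S, ((T.filter (E j)).card.factorial : ℝ) ^ ((1:ℝ) / ((T.filter (E j)).card : ℝ)) := by
  induction N with
  | zero =>
    intro S T hS
    rw [Finset.card_eq_zero] at hS; subst hS
    simp only [Finset.prod_empty]
    have h1 : (pm E ∅ T).card ≤ 1 := by
      apply Finset.card_le_one.mpr
      intro a ha b hb
      have ha' := ((mem_pm E).mp ha).1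
      have hb' := ((mem_pm E).mp hb).1
      rw [Finset.empty_product] at ha' hb'
      rw [Finset.subset_empty.mp ha', Finset.subset_empty.mp hb']
    exact_mod_cast h1
  | succ N ih =>
    intro S T hS
    set d : Fin n → ℕ := fun j => (T.filter (E j)).card with hd
    rcases Finset.eq_empty_or_nonempty (pm E S T) with hemp | hne
    · rw [hemp]
      simp only [Finset.card_empty, Nat.cast_zero]
      exact Finset.prod_nonneg fun j _ => Real.rpow_nonneg (Nat.cast_nonneg _) _
    set M := (pm E S T).card with hMdef
    have hM1 : 1 ≤ M := Finset.card_pos.mpr hne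
    have hdpos : ∀ j ∈ S, 0 < d j := fun j hj => deg_pos E hne hj
    have hTcard : T.card = N + 1 := by
      obtain ⟨m, hm⟩ := hne
      obtain ⟨-, -, -, h3, h4, -⟩ := (mem_pm E).mp hm
      omega
    have hdle : ∀ j, d j ≤ N + 1 := fun j => hTcard ▸ Finset.card_filter_le _ _
    set D : Fin n → Fin n → ℕ := fun i k => (pm E (S.erase i) (T.erase k)).card with hD
    have hBC : ∀ i ∈ S, (M:ℝ)^M ≤ ∏ m ∈ pm E S T, ((d i : ℝ) * (D i (col m i) : ℝ)) := by
      intro i hi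
      have hexp : ∑ k ∈ T.filter (E i), D i k = M := (pm_card_expansion E hi).symm
      have hAM := amgm_pow (T.filter (E i)) (fun k => D i k) M hexp
      calc (M:ℝ)^M ≤ (d i : ℝ)^M * ∏ k ∈ T.filter (E i), ((D i k : ℕ) : ℝ)^(D i k) := hAM
        _ = (d i : ℝ)^M * ∏ m ∈ pm E S T, (D i (col m i) : ℝ) := by
            rw [pm_prod_expansion E hi (fun k => (D i k : ℝ))]
        _ = ∏ m ∈ pm E S T, ((d i : ℝ) * (D i (col m i) : ℝ)) := by
            rw [Finset.prod_mul_distrib, Finset.prod_const]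
    set c1 : Fin n → ℝ := fun j => (((d j - 1).factorial : ℝ)) ^ ((1:ℝ)/(((d j - 1 : ℕ)) : ℝ))
      with hc1
    set c2 : Fin n → ℝ := fun j => ((d j).factorial : ℝ) ^ ((1:ℝ)/((d j : ℕ) : ℝ)) with hc2
    have hc1nn : ∀ j, 0 ≤ c1 j := fun j => Real.rpow_nonneg (Nat.cast_nonneg _) _
    have hc2nn : ∀ j, 0 ≤ c2 j := fun j => Real.rpow_nonneg (Nat.cast_nonneg _) _
    have hStepE : ∀ m ∈ pm E S T,
        ∏ i ∈ S, ((d i : ℝ) * (D i (col m i) : ℝ)) ≤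
          ∏ j ∈ S, ((d j).factorial : ℝ) ^ (((N:ℝ)+1)/((d j : ℕ) : ℝ)) := by
      intro m hm
      have hIH : ∀ i ∈ S, (D i (col m i) : ℝ) ≤
          ∏ j ∈ S.erase i, (if E j (col m i) then c1 j else c2 j) := by
        intro i hi
        have hk : col m i ∈ T := col_mem_T E hm hi
        have hbound := ih (S.erase i) (T.erase (col m i))
          (by rw [Finset.card_erase_of_mem hi, hS]; omega)
        refine le_trans hbound (le_of_eq (Finset.prod_congr rfl ?_))
        intro j hj
        have hfe : (T.erase (col m i)).filter (E j) = (T.filter (E j)).erase (col m i) :=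
          Finset.filter_erase _ _ _
        rw [hfe]
        by_cases hEj : E j (col m i)
        · rw [if_pos hEj, Finset.card_erase_of_mem (Finset.mem_filter.mpr ⟨hk, hEj⟩)]
        · rw [if_neg hEj,
            Finset.erase_eq_of_notMem (fun hmem => hEj (Finset.mem_filter.mp hmem).2)]
      calc ∏ i ∈ S, ((d i : ℝ) * (D i (col m i) : ℝ))
          ≤ ∏ i ∈ S, ((d i : ℝ) * ∏ j ∈ S.erase i, (if E j (col m i) then c1 j else c2 j)) := by
            apply Finset.prod_le_prod
            · intro i _; positivity
            · intro i hi
              exact mul_le_mul_of_nonneg_left (hIH i hi) (Nat.cast_nonneg _)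
        _ = (∏ i ∈ S, (d i : ℝ)) *
              ∏ i ∈ S, ∏ j ∈ S.erase i, (if E j (col m i) then c1 j else c2 j) :=
            Finset.prod_mul_distrib
        _ = (∏ i ∈ S, (d i : ℝ)) *
              ∏ j ∈ S, ∏ i ∈ S.erase j, (if E j (col m i) then c1 j else c2 j) := by
            congr 1
            refine Finset.prod_comm' ?_
            intro x y
            simp only [Finset.mem_erase]
            constructor
            · rintro ⟨hx, hyx, hy⟩; exact ⟨⟨fun h => hyx (h ▸ rfl), hx⟩, hy⟩
            · rintro ⟨⟨hxy, hx⟩, hy⟩; exact ⟨hx, fun h => hxy (h ▸ rfl), hy⟩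
        _ = ∏ j ∈ S, ((d j : ℝ) * ∏ i ∈ S.erase j, (if E j (col m i) then c1 j else c2 j)) :=
            Finset.prod_mul_distrib.symm
        _ = ∏ j ∈ S, ((d j).factorial : ℝ) ^ (((N:ℝ)+1)/((d j : ℕ) : ℝ)) := by
            apply Finset.prod_congr rfl
            intro j hj
            have hA : ((S.erase j).filter (fun i => E j (col m i))).card = d j - 1 := by
              have hjmem : j ∈ S.filter (fun i => E j (col m i)) :=
                Finset.mem_filter.mpr ⟨hj, col_edge E hm hj⟩
              rw [Finset.filter_erase, Finset.card_erase_of_mem hjmem, card_colFilter E hm j]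
            have hB : ((S.erase j).filter (fun i => ¬ E j (col m i))).card = N + 1 - d j := by
              have hsum := Finset.card_filter_add_card_filter_not
                (s := S.erase j) (p := fun i => E j (col m i))
              rw [Finset.card_erase_of_mem hj, hS] at hsum
              have h1 := hdpos j hj
              have h2 := hdle j
              omega
            rw [Finset.prod_ite (fun _ => c1 j) (fun _ => c2 j), Finset.prod_const,
              Finset.prod_const, hA, hB, ← mul_assoc]
            exact keycalc N (d j) (hdpos j hj) (hdle j)
    have hYnn : 0 ≤ ∏ j ∈ S, c2 j := Finset.prod_nonneg fun j _ => hc2nn j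
    have hYpow : ∏ j ∈ S, ((d j).factorial : ℝ) ^ (((N:ℝ)+1)/((d j : ℕ) : ℝ))
        = (∏ j ∈ S, c2 j) ^ (N+1) := by
      rw [← Finset.prod_pow]
      apply Finset.prod_congr rfl
      intro j hj
      simp only [hc2]
      rw [← Real.rpow_natCast ((((d j).factorial : ℝ)) ^ ((1:ℝ) / ((d j : ℕ) : ℝ))) (N+1),
        ← Real.rpow_mul (Nat.cast_nonneg _)]
      congr 1
      push_cast
      field_simp
    have hchain : ((M:ℝ)^M)^(N+1) ≤ ((∏ j ∈ S, c2 j)^(N+1))^M := by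
      calc ((M:ℝ)^M)^(N+1) = ∏ _i ∈ S, (M:ℝ)^M := by rw [Finset.prod_const, hS]
        _ ≤ ∏ i ∈ S, ∏ m ∈ pm E S T, ((d i : ℝ) * (D i (col m i) : ℝ)) :=
            Finset.prod_le_prod (fun _ _ => by positivity) hBC
        _ = ∏ m ∈ pm E S T, ∏ i ∈ S, ((d i : ℝ) * (D i (col m i) : ℝ)) := Finset.prod_comm
        _ ≤ ∏ m ∈ pm E S T, ∏ j ∈ S, ((d j).factorial : ℝ) ^ (((N:ℝ)+1)/((d j : ℕ) : ℝ)) :=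
            Finset.prod_le_prod
              (fun m _ => Finset.prod_nonneg fun i _ => by positivity) hStepE
        _ = (∏ j ∈ S, ((d j).factorial : ℝ) ^ (((N:ℝ)+1)/((d j : ℕ) : ℝ)))^M :=
            Finset.prod_const _
        _ = ((∏ j ∈ S, c2 j)^(N+1))^M := by rw [hYpow]
    have hexp : ((M:ℝ)^M)^(N+1) = (M:ℝ)^(M*(N+1)) := by rw [← pow_mul]
    have hexp2 : ((∏ j ∈ S, c2 j)^(N+1))^M = (∏ j ∈ S, c2 j)^(M*(N+1)) := by
      rw [← pow_mul, mul_comm]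
    rw [hexp, hexp2] at hchain
    show (M:ℝ) ≤ ∏ j ∈ S, c2 j
    exact (pow_le_pow_iff_left₀ (Nat.cast_nonneg M) hYnn
      (by positivity)).mp hchain

lemma perm_card_eq_pm :
    (univ.filter (fun σ : Equiv.Perm (Fin n) => ∀ i, E i (σ i))).card
      = (pm E univ univ).card := by
  refine Finset.card_nbij (fun σ => univ.image (fun i => (i, σ i))) ?_ ?_ ?_
  · intro σ hσ
    have hσ' := (Finset.mem_filter.mp hσ).2
    have hinj : Function.Injective (fun i : Fin n => (i, σ i)) := by
      intro a b h
      exact congrArg Prod.fst h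
    rw [Finset.mem_coe, mem_pm]
    refine ⟨?_, ?_, ?_, ?_, ?_, ?_⟩
    · intro p _
      exact Finset.mem_product.mpr ⟨Finset.mem_univ _, Finset.mem_univ _⟩
    · ext j
      simp only [Finset.mem_image, Finset.mem_univ, iff_true]
      exact ⟨⟨j, σ j⟩, by simp, rfl⟩
    · ext j
      simp only [Finset.mem_image, Finset.mem_univ, iff_true]
      exact ⟨⟨σ.symm j, σ (σ.symm j)⟩, by simp, by simp⟩
    · rw [Finset.card_image_of_injective _ hinj]
    · rw [Finset.card_image_of_injective _ hinj]
    · intro p hp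
      obtain ⟨i, -, rfl⟩ := Finset.mem_image.mp hp
      exact hσ' i
  · intro σ hσ σ' hσ' h
    apply Equiv.ext
    intro i
    have h' : univ.image (fun i : Fin n => (i, σ i)) = univ.image (fun j : Fin n => (j, σ' j)) := h
    have : (i, σ i) ∈ univ.image (fun j : Fin n => (j, σ' j)) := by
      rw [← h']
      exact Finset.mem_image_of_mem _ (Finset.mem_univ i)
    obtain ⟨j, -, hj⟩ := Finset.mem_image.mp this
    have := congrArg Prod.fst hj
    simp only at this
    subst this
    exact (congrArg Prod.snd hj).symm
  · intro m hm
    have hm' : m ∈ pm E univ univ := by simpa using hm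
    have hinj : Function.Injective (fun i => col m i) := by
      have := col_injOn E hm'
      rw [Finset.coe_univ] at this
      exact fun a b h => this (Set.mem_univ a) (Set.mem_univ b) h
    set σ : Equiv.Perm (Fin n) :=
      Equiv.ofBijective _ (Finite.injective_iff_bijective.mp hinj) with hσdef
    have hσapp : ∀ i, σ i = col m i := fun i => rfl
    refine ⟨σ, ?_, ?_⟩
    · simp only [Finset.coe_filter, Set.mem_setOf_eq, Finset.mem_univ, true_and]
      intro i
      rw [hσapp]
      exact col_edge E hm' (Finset.mem_univ i)
    · have hsub : univ.image (fun i => (i, σ i)) ⊆ m := by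
        intro p hp
        obtain ⟨i, -, rfl⟩ := Finset.mem_image.mp hp
        rw [hσapp]
        exact col_spec E hm' (Finset.mem_univ i)
      have hinj2 : Function.Injective (fun i : Fin n => (i, σ i)) := fun a b h =>
        congrArg Prod.fst h
      apply Finset.eq_of_subset_of_card_le hsub
      rw [Finset.card_image_of_injective _ hinj2]
      obtain ⟨-, -, -, h3, -, -⟩ := (mem_pm E).mp hm'
      rw [h3]

open Finset in
/-- Brégman's theorem: in a bipartite graph with parts of equal size `n`
(modelled by the edge relation `E : Fin n → Fin n → Prop`), the number of
perfect matchings is at most `∏ i, (dᵢ!)^(1/dᵢ)` where `dᵢ` are the degrees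
of the vertices in one class. -/
theorem bregman (n : ℕ) (E : Fin n → Fin n → Prop) [∀ i, DecidablePred (E i)] :
    (Nat.card {σ : Equiv.Perm (Fin n) // ∀ i, E i (σ i)} : ℝ) ≤
      ∏ i : Fin n,
        (((univ.filter (E i)).card.factorial : ℝ)) ^
          ((1 : ℝ) / ((univ.filter (E i)).card : ℝ)) := by
  have h0 : Nat.card {σ : Equiv.Perm (Fin n) // ∀ i, E i (σ i)}
      = (univ.filter (fun σ : Equiv.Perm (Fin n) => ∀ i, E i (σ i))).card := by
    rw [Nat.card_eq_fintype_card, Fintype.card_subtype]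
  rw [h0, perm_card_eq_pm E]
  exact pm_card_le E (univ : Finset (Fin n)).card univ univ rfl
end

section
/- Let P be a graded rank-symmetric poset with three levels X, Y, Z with |X| = |Z| = a < |Y| = b. Construct a bipartite graph G with vertex classes U = Y_1 ∪ X and V = Y_2 ∪ Z, where Y_1 and Y_2 are two disjoint copies of Y, and with edges: {x, y_2} whenever x ∈ X is comparable to y ∈ Y (y_2 the copy of y in Y_2), {z, y_1} whenever z ∈ Z is comparable to y ∈ Y (y_1 the copy of y in Y_1), and {y_1, y_2} for the two copies of each y ∈ Y. Then there is a bijection between the perfect matchings of G and the symmetric chain decompositions of P. -/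
/-- A symmetric chain decomposition of a graded rank-symmetric three-level poset
with levels `X, Y, Z` and comparability relations `R : X → Y → Prop`,
`S : Y → Z → Prop`.  Such a decomposition partitions the poset into chains that
are either single elements of `Y` or triples `x < y < z`; it is encoded by the
assignment `φ` of each `x ∈ X` to the middle element of its chain and the
assignment `ψ` of each `z ∈ Z` to the middle element of its chain: these must be
injective, respect comparability, and use the same set of middle elements (the
unused elements of `Y` form the singleton chains). -/
structure SCD3 (X Y Z : Type*) (R : X → Y → Prop) (S : Y → Z → Prop) where
  φ : X → Y
  ψ : Z → Y
  hφ : Function.Injective φ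
  hψ : Function.Injective ψ
  hR : ∀ x, R x (φ x)
  hS : ∀ z, S (ψ z) z
  hrange : Set.range φ = Set.range ψ

/-- The edge relation of the auxiliary bipartite graph `G` with classes
`U = Y₁ ∪ X` and `V = Y₂ ∪ Z`: edges `{x, y₂}` for `x` comparable to `y`,
`{z, y₁}` for `z` comparable to `y`, and `{y₁, y₂}` joining the two copies of
each `y ∈ Y`. -/
def auxEdge {X Y Z : Type*} (R : X → Y → Prop) (S : Y → Z → Prop) :
    (Y ⊕ X) → (Y ⊕ Z) → Prop
  | .inl y₁, .inl y₂ => y₁ = y₂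
  | .inr x, .inl y₂ => R x y₂
  | .inl y₁, .inr z => S y₁ z
  | .inr _, .inr _ => False

namespace SCDaux

variable {X Y Z : Type*} {R : X → Y → Prop} {S : Y → Z → Prop}

theorem SCD3.ext' {D1 D2 : SCD3 X Y Z R S} (h1 : D1.φ = D2.φ) (h2 : D1.ψ = D2.ψ) :
    D1 = D2 := by
  cases D1; cases D2; simp_all

abbrev PM (R : X → Y → Prop) (S : Y → Z → Prop) :=
  {M : (Y ⊕ X) ≃ (Y ⊕ Z) // ∀ u, auxEdge R S u (M u)}

lemma exists_midX (M : PM R S) (x : X) : ∃ y, M.1 (.inr x) = .inl y := by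
  have h := M.2 (.inr x)
  cases hx : M.1 (.inr x) with
  | inl y => exact ⟨y, rfl⟩
  | inr z => rw [hx] at h; exact h.elim

lemma exists_midZ (M : PM R S) (z : Z) : ∃ y, M.1.symm (.inr z) = .inl y := by
  have h := M.2 (M.1.symm (.inr z))
  rw [Equiv.apply_symm_apply] at h
  cases hz : M.1.symm (.inr z) with
  | inl y => exact ⟨y, rfl⟩
  | inr x => rw [hz] at h; exact h.elim

noncomputable def φM (M : PM R S) (x : X) : Y := (exists_midX M x).choose
noncomputable def ψM (M : PM R S) (z : Z) : Y := (exists_midZ M z).choose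

lemma φM_spec (M : PM R S) (x : X) : M.1 (.inr x) = .inl (φM M x) :=
  (exists_midX M x).choose_spec

lemma ψM_spec (M : PM R S) (z : Z) : M.1.symm (.inr z) = .inl (ψM M z) :=
  (exists_midZ M z).choose_spec

noncomputable def fwd (M : PM R S) : SCD3 X Y Z R S where
  φ := φM M
  ψ := ψM M
  hφ := fun x x' h => by
    have : M.1 (.inr x) = M.1 (.inr x') := by rw [φM_spec, φM_spec, h]
    exact Sum.inr.inj (M.1.injective this)
  hψ := fun z z' h => by
    have : M.1.symm (.inr z) = M.1.symm (.inr z') := by rw [ψM_spec, ψM_spec, h]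
    exact Sum.inr.inj (M.1.symm.injective this)
  hR := fun x => by
    have h := M.2 (.inr x)
    rw [φM_spec M x] at h
    exact h
  hS := fun z => by
    have h := M.2 (M.1.symm (.inr z))
    rw [Equiv.apply_symm_apply, ψM_spec M z] at h
    exact h
  hrange := by
    ext y
    constructor
    · rintro ⟨x, rfl⟩
      cases hy : M.1 (.inl (φM M x)) with
      | inl y' =>
        exfalso
        have he : φM M x = y' := by have := M.2 (.inl (φM M x)); rwa [hy] at this
        have : M.1 (.inl (φM M x)) = M.1 (.inr x) := by rw [hy, ← he, φM_spec]
        exact absurd (M.1.injective this) (by simp)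
      | inr z =>
        refine ⟨z, ?_⟩
        have : M.1.symm (.inr z) = .inl (φM M x) := by rw [Equiv.symm_apply_eq, hy]
        exact Sum.inl.inj ((ψM_spec M z).symm.trans this)
    · rintro ⟨z, rfl⟩
      cases hy : M.1.symm (.inl (ψM M z)) with
      | inl y' =>
        exfalso
        have happ : M.1 (.inl y') = .inl (ψM M z) := by rw [← hy, Equiv.apply_symm_apply]
        have he : y' = ψM M z := by have := M.2 (.inl y'); rwa [happ] at this
        rw [he] at happ
        have h3 : M.1.symm (.inl (ψM M z)) = .inl (ψM M z) := by
          rw [Equiv.symm_apply_eq, happ]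
        have := M.1.symm.injective (h3.trans (ψM_spec M z).symm)
        exact absurd this (by simp)
      | inr x =>
        refine ⟨x, ?_⟩
        have : M.1 (.inr x) = .inl (ψM M z) := by
          rw [← hy, Equiv.apply_symm_apply]
        exact Sum.inl.inj ((φM_spec M x).symm.trans this)

noncomputable def bwdFun (D : SCD3 X Y Z R S) : (Y ⊕ X) → (Y ⊕ Z)
  | .inl y => @dite _ (∃ z, D.ψ z = y) (Classical.dec _) (fun h => .inr h.choose)
      (fun _ => .inl y)
  | .inr x => .inl (D.φ x)

lemma bwdFun_inl_pos (D : SCD3 X Y Z R S) {y : Y} (h : ∃ z, D.ψ z = y) :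
    bwdFun D (.inl y) = .inr h.choose := by
  simp only [bwdFun]; rw [dif_pos h]

lemma bwdFun_inl_neg (D : SCD3 X Y Z R S) {y : Y} (h : ¬ ∃ z, D.ψ z = y) :
    bwdFun D (.inl y) = .inl y := by
  simp only [bwdFun]; rw [dif_neg h]

lemma bwdFun_inr (D : SCD3 X Y Z R S) (x : X) : bwdFun D (.inr x) = .inl (D.φ x) := rfl

lemma bwdFun_injective (D : SCD3 X Y Z R S) : Function.Injective (bwdFun D) := by
  rintro (y | x) (y' | x') h
  · by_cases h1 : ∃ z, D.ψ z = y <;> by_cases h2 : ∃ z, D.ψ z = y'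
    · rw [bwdFun_inl_pos D h1, bwdFun_inl_pos D h2] at h
      have hc := Sum.inr.inj h
      have : y = y' := by rw [← h1.choose_spec, ← h2.choose_spec, hc]
      rw [this]
    · rw [bwdFun_inl_pos D h1, bwdFun_inl_neg D h2] at h
      exact absurd h (by simp)
    · rw [bwdFun_inl_neg D h1, bwdFun_inl_pos D h2] at h
      exact absurd h (by simp)
    · rw [bwdFun_inl_neg D h1, bwdFun_inl_neg D h2] at h
      exact congrArg Sum.inl (Sum.inl.inj h)
  · exfalso
    rw [bwdFun_inr] at h
    by_cases h1 : ∃ z, D.ψ z = y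
    · rw [bwdFun_inl_pos D h1] at h
      exact absurd h (by simp)
    · rw [bwdFun_inl_neg D h1] at h
      apply h1
      have : y ∈ Set.range D.φ := ⟨x', (Sum.inl.inj h).symm⟩
      rwa [D.hrange] at this
  · exfalso
    rw [bwdFun_inr] at h
    by_cases h1 : ∃ z, D.ψ z = y'
    · rw [bwdFun_inl_pos D h1] at h
      exact absurd h (by simp)
    · rw [bwdFun_inl_neg D h1] at h
      apply h1
      have : y' ∈ Set.range D.φ := ⟨x, Sum.inl.inj h⟩
      rwa [D.hrange] at this
  · exact congrArg Sum.inr (D.hφ (Sum.inl.inj h))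

noncomputable def bwd [Fintype X] [Fintype Y] [Fintype Z]
    (ha : Fintype.card X = Fintype.card Z) (D : SCD3 X Y Z R S) : PM R S := by
  refine ⟨Equiv.ofBijective (bwdFun D)
    ((Fintype.bijective_iff_injective_and_card _).2 ⟨bwdFun_injective D, by simp [ha]⟩), ?_⟩
  rintro (y | x)
  · show auxEdge R S (.inl y) (bwdFun D (.inl y))
    by_cases h : ∃ z, D.ψ z = y
    · rw [bwdFun_inl_pos D h]
      show S y h.choose
      have := D.hS h.choose
      rwa [h.choose_spec] at this
    · rw [bwdFun_inl_neg D h]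
      rfl
  · show auxEdge R S (.inr x) (bwdFun D (.inr x))
    exact D.hR x

end SCDaux

open SCDaux

/-- There is a bijection between the perfect matchings of the auxiliary bipartite
graph and the symmetric chain decompositions of the three-level poset. -/
theorem matchings_equiv_scd3 (X Y Z : Type*) [Fintype X] [Fintype Y] [Fintype Z]
    (R : X → Y → Prop) (S : Y → Z → Prop)
    (ha : Fintype.card X = Fintype.card Z)
    (hab : Fintype.card X < Fintype.card Y) :
    Nonempty (({M : (Y ⊕ X) ≃ (Y ⊕ Z) // ∀ u, auxEdge R S u (M u)}) ≃ SCD3 X Y Z R S) := by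
  refine ⟨{ toFun := fwd, invFun := bwd ha, left_inv := ?_, right_inv := ?_ }⟩
  · intro M
    apply Subtype.ext
    apply Equiv.ext
    rintro (y | x)
    · show bwdFun (fwd M) (.inl y) = M.1 (.inl y)
      by_cases h : ∃ z, (fwd M).ψ z = y
      · rw [bwdFun_inl_pos _ h]
        have hc : ψM M h.choose = y := h.choose_spec
        rw [eq_comm, Equiv.apply_eq_iff_eq_symm_apply, ψM_spec, hc]
      · rw [bwdFun_inl_neg _ h]
        cases hy : M.1 (.inl y) with
        | inl y' =>
          have he := M.2 (.inl y)
          rw [hy] at he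
          exact congrArg Sum.inl he
        | inr z =>
          exfalso
          apply h
          refine ⟨z, ?_⟩
          have : M.1.symm (.inr z) = .inl y := by rw [Equiv.symm_apply_eq, hy]
          exact Sum.inl.inj ((ψM_spec M z).symm.trans this)
    · show bwdFun (fwd M) (.inr x) = M.1 (.inr x)
      exact (φM_spec M x).symm
  · intro D
    apply SCD3.ext'
    · funext x
      have h1 : (bwd ha D).1 (.inr x) = .inl (φM (bwd ha D) x) := φM_spec _ x
      have h2 : (bwd ha D).1 (.inr x) = .inl (D.φ x) := rfl
      exact Sum.inl.inj (h1.symm.trans h2)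
    · funext z
      show ψM (bwd ha D) z = D.ψ z
      have h1 : (bwd ha D).1 (.inl (ψM (bwd ha D) z)) = .inr z := by
        rw [Equiv.apply_eq_iff_eq_symm_apply]
        exact (ψM_spec _ z).symm
      have h2 : (bwd ha D).1 (.inl (ψM (bwd ha D) z)) =
          bwdFun D (.inl (ψM (bwd ha D) z)) := rfl
      rw [h2] at h1
      by_cases h : ∃ z', D.ψ z' = ψM (bwd ha D) z
      · rw [bwdFun_inl_pos D h] at h1
        have hc := Sum.inr.inj h1
        rw [← h.choose_spec, hc]
      · rw [bwdFun_inl_neg D h] at h1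
        exact absurd h1 (by simp)
end
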